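/- For all integers m and d with 1 ≤ d < m, one has g(m,d) + g(m,d-1) = 2^{m-d}·C(m,d). -/

import Mathlib

/-- An (abstract) simplicial complex: a collection of finite subsets of `ℕ`
closed under taking subsets. -/
def IsComplex (K : Finset (Finset ℕ)) : Prop :=
  ∀ σ ∈ K, ∀ τ ⊆ σ, τ ∈ K

/-- The vertex set of a complex: the union of all its simplices. -/
def verts (K : Finset (Finset ℕ)) : Finset ℕ := K.sup id

/-- The space of (augmented) simplicial `j`-chains: formal `F`-linear combinations of
simplices of cardinality `j` (so chain degree `j` corresponds to dimension `j - 1`;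
degree `0` is spanned by the empty simplex). -/
abbrev Chain (F : Type*) [Field F] (K : Finset (Finset ℕ)) (j : ℕ) : Type _ :=
  {σ // σ ∈ K.filter (fun σ => σ.card = j)} → F

/-- The simplicial boundary operator (of the augmented chain complex), with the usual
signs `(-1)^{position of the deleted vertex}`. -/
noncomputable def bdry (F : Type*) [Field F] (K : Finset (Finset ℕ)) (j : ℕ) :
    Chain F K (j + 1) →ₗ[F] Chain F K j where
  toFun c := fun τ =>
    ∑ v ∈ verts K,
      if h : v ∉ τ.1 ∧ insert v τ.1 ∈ K.filter (fun σ => σ.card = j + 1) then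
        (-1 : F) ^ ((τ.1.filter (fun u => u < v)).card) * c ⟨insert v τ.1, h.2⟩
      else 0
  map_add' c d := by
    funext τ
    show _ = (_ : F) + (_ : F)
    rw [← Finset.sum_add_distrib]
    refine Finset.sum_congr rfl fun v _ => ?_
    by_cases h : v ∉ τ.1 ∧ insert v τ.1 ∈ K.filter (fun σ => σ.card = j + 1)
    · rw [dif_pos h, dif_pos h, dif_pos h, ← mul_add]
      rfl
    · rw [dif_neg h, dif_neg h, dif_neg h, add_zero]
  map_smul' a c := by
    funext τ
    show _ = a * _
    rw [Finset.mul_sum]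
    refine Finset.sum_congr rfl fun v _ => ?_
    by_cases h : v ∉ τ.1 ∧ insert v τ.1 ∈ K.filter (fun σ => σ.card = j + 1)
    · rw [dif_pos h, dif_pos h]
      show _ * (a * _) = _
      ring
    · rw [dif_neg h, dif_neg h, mul_zero]

/-- The dimension of the `j`-th homology of the augmented simplicial chain complex of `K`.
Degree `j` corresponds to the reduced homology group `H̃_{j-1}` of the realization of `K`. -/
noncomputable def hBetti (F : Type*) [Field F] (K : Finset (Finset ℕ)) : ℕ → ℕ
  | 0 => Module.finrank F (Chain F K 0) - Module.finrank F (LinearMap.range (bdry F K 0))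
  | j + 1 =>
      Module.finrank F (LinearMap.ker (bdry F K j)) -
        Module.finrank F (LinearMap.range (bdry F K (j + 1)))

/-- The reduced total Betti number `t̃b(K; F) = ∑ i dim H̃ i (K; F)` of (the geometric
realization of) `K`, with the convention `t̃b(∅; F) = 1` (coming from `β̃₋₁(∅) = 1`;
note that if `K` is nonempty and closed under subsets then `∅ ∈ K` and the augmented
chain complex accounts for `β̃₋₁` automatically). -/
noncomputable def rtb (F : Type*) [Field F] (K : Finset (Finset ℕ)) : ℕ :=
  if K = ∅ then 1 else ∑ j ∈ Finset.range ((verts K).card + 1), hBetti F K j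

/-- The full subcomplex `K|_J` of `K` on a vertex set `J`. -/
def restr (K : Finset (Finset ℕ)) (J : Finset ℕ) : Finset (Finset ℕ) :=
  K.filter (fun σ => σ ⊆ J)

/-- The total bigraded Betti number `D̃(K; F) = ∑_{J ⊆ V} t̃b(K|_J; F)`
with respect to a ground vertex set `V`. -/
noncomputable def Dtilde (F : Type*) [Field F] (V : Finset ℕ) (K : Finset (Finset ℕ)) : ℕ :=
  ∑ J ∈ V.powerset, rtb F (restr K J)


/-- The `k`-skeleton `Δ^[m]_(k)` of the full simplex on the vertex set
`[m] = {0, 1, …, m-1}`: all subsets of cardinality at most `k + 1`. -/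
def skel (m k : ℕ) : Finset (Finset ℕ) :=
  (Finset.range m).powerset.filter (fun σ => σ.card ≤ k + 1)

/-- The `k`-skeleton of the full simplex on `[m]` for an integer `k`
(so `k = -1` gives the empty complex `{∅}`). -/
def skelZ (m : ℕ) (k : ℤ) : Finset (Finset ℕ) :=
  (Finset.range m).powerset.filter (fun σ => (σ.card : ℤ) ≤ k + 1)

/-- `Δ^[m]_(k)⟨d⟩`: the union of the `k`-skeleton of the full simplex on `[m]`
with the single `d`-simplex `{0, 1, …, d}` and all its faces. -/
def skelD (m k d : ℕ) : Finset (Finset ℕ) :=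
  skel m k ∪ (Finset.range (d + 1)).powerset

/-- `K` and `L` are isomorphic simplicial complexes: some injection of the vertex
set of `K` maps the simplices of `K` exactly onto the simplices of `L`. -/
def SIso (K L : Finset (Finset ℕ)) : Prop :=
  ∃ f : ℕ → ℕ, Set.InjOn f ↑(verts K) ∧ L = K.image (fun σ => σ.image f)

/-- `g(m,d) = ∑_{j=d+1}^{m} C(m,j)·C(j-1,d)`. -/
def g (m d : ℕ) : ℕ := ∑ j ∈ Finset.Icc (d + 1) m, m.choose j * (j - 1).choose d

/-- The join `K * L` of two simplicial complexes (on disjoint vertex sets). -/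
def sJoin (K L : Finset (Finset ℕ)) : Finset (Finset ℕ) :=
  (K ×ˢ L).image fun p => p.1 ∪ p.2

/-- A `d`-dimensional simplicial complex `K` with `m` vertices is tight over `F` if
`D̃(K;F) = 2^{m-d-1}` (note `m - d - 1 = m - (d+1)` and `d + 1 = max σ∈K |σ|`),
where `D̃` is computed with respect to the vertex set of `K`. -/
def IsTight (F : Type*) [Field F] (K : Finset (Finset ℕ)) : Prop :=
  Dtilde F (verts K) K = 2 ^ ((verts K).card - K.sup Finset.card)

/-- The link of a simplex `σ` in `K`. -/
def linkK (K : Finset (Finset ℕ)) (σ : Finset ℕ) : Finset (Finset ℕ) :=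
  K.filter (fun τ => Disjoint τ σ ∧ τ ∪ σ ∈ K)

/-- `K` is pure: every maximal simplex has the maximum cardinality `dim K + 1`. -/
def IsPure (K : Finset (Finset ℕ)) : Prop :=
  ∀ σ ∈ K, (∀ τ ∈ K, σ ⊆ τ → σ = τ) → σ.card = K.sup Finset.card

/-- A near-cone (with apex vertex `0`): for every simplex `S` with `0 ∉ S` and every
`j ∈ S`, `(S \ j) ∪ {0}` is again a simplex. -/
def IsNearCone (Δ : Finset (Finset ℕ)) : Prop :=
  ∀ S ∈ Δ, 0 ∉ S → ∀ j ∈ S, insert 0 (S.erase j) ∈ Δ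

/-- `B(Δ) = {S ∈ Δ : S ∪ {0} ∉ Δ}` for a near-cone `Δ` with apex `0`. -/
def BSet (Δ : Finset (Finset ℕ)) : Finset (Finset ℕ) :=
  Δ.filter (fun S => insert 0 S ∉ Δ)

/-- A Sperner family of the finite set `X`: a family of subsets of `X`, no member
containing another member. -/
def IsSperner (X : Finset ℕ) (F : Finset (Finset ℕ)) : Prop :=
  (∀ A ∈ F, A ⊆ X) ∧ ∀ A ∈ F, ∀ B ∈ F, A ⊆ B → A = B

/-- The geometric realization of `K` is disconnected: the vertex set splits into two
nonempty parts such that every simplex lies entirely in one of the parts. -/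
def IsDisconn (K : Finset (Finset ℕ)) : Prop :=
  ∃ A B : Finset ℕ, A.Nonempty ∧ B.Nonempty ∧ Disjoint A B ∧ A ∪ B = verts K ∧
    ∀ σ ∈ K, σ ⊆ A ∨ σ ⊆ B

/-- The boundary `∂Δ^A` of the full simplex on the vertex set `A`: all proper subsets
of `A`.  (For `|A| = 1` this is the empty complex `{∅}`.) -/
def bdSimplex (A : Finset ℕ) : Finset (Finset ℕ) := A.powerset.erase A

/-! Pascal's rule `C(j-1,d) + C(j-1,d-1) = C(j,d)` merges the two sums into
`∑_{j=d}^{m} C(m,j) C(j,d)`, and `C(m,j) C(j,d) = C(m,d) C(m-d,j-d)` turns this into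
`C(m,d) ∑_k C(m-d,k) = C(m,d) 2^{m-d}`. -/

open Finset

theorem Nat.sum_Icc_choose_mul_choose (m d : ℕ) :
    ∑ j ∈ Icc d m, m.choose j * j.choose d = 2 ^ (m - d) * m.choose d := by
  rcases lt_or_ge m d with hmd | hdm
  · simp [Icc_eq_empty_of_lt hmd, Nat.choose_eq_zero_of_lt hmd]
  have hIcc : Icc d m = Ico d (m - d + 1 + d) := by
    rw [show m - d + 1 + d = m + 1 by omega]; rfl
  rw [hIcc, sum_Ico_eq_sum_range, Nat.add_sub_cancel, ← Nat.sum_range_choose, mul_comm,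
    mul_sum]
  refine sum_congr rfl fun k _ => ?_
  rw [Nat.choose_mul (Nat.le_add_right d k), Nat.add_sub_cancel_left]

theorem g_succ_eq_sum_Icc (m d : ℕ) :
    g m (d + 1) = ∑ j ∈ Icc (d + 1) m, m.choose j * (j - 1).choose (d + 1) := by
  rcases lt_or_ge m (d + 1) with hmd | hdm
  · simp [g, Icc_eq_empty_of_lt hmd, Icc_eq_empty_of_lt (Nat.lt_succ_of_lt hmd)]
  rw [g, ← insert_Icc_add_one_left_eq_Icc hdm, sum_insert (by simp)]
  simp

theorem g_succ_add_g (m d : ℕ) :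
    g m (d + 1) + g m d = ∑ j ∈ Icc (d + 1) m, m.choose j * j.choose (d + 1) := by
  rw [g_succ_eq_sum_Icc, g, ← sum_add_distrib]
  refine sum_congr rfl fun j hj => ?_
  obtain ⟨i, rfl⟩ : ∃ i, j = i + 1 := ⟨j - 1, by grind⟩
  rw [Nat.add_sub_cancel, ← mul_add, add_comm (i.choose (d + 1)), ← Nat.choose_succ_succ']

theorem stmt18_general (m d : ℕ) (h1 : 1 ≤ d) :
    g m d + g m (d - 1) = 2 ^ (m - d) * m.choose d := by
  obtain ⟨e, rfl⟩ := Nat.exists_eq_add_of_le' h1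
  rw [Nat.add_sub_cancel, g_succ_add_g, Nat.sum_Icc_choose_mul_choose]

/-- `g(m,d) + g(m,d-1) = 2^{m-d}·C(m,d)` for `1 ≤ d < m`. -/
theorem stmt18 (m d : ℕ) (h1 : 1 ≤ d) (h2 : d < m) :
    g m d + g m (d - 1) = 2 ^ (m - d) * m.choose d :=
  stmt18_general m d h1
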